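/- arXiv:1912.08164 — 4 statements merged into one kernel-verified Lean document; each statement's English description precedes it below -/
import Mathlib

section
/- Let φ be a coercive Orlicz function that is differentiable on (0,∞) and satisfies lim_{u→∞} u·φ'(u)/φ(u) = 1. Then for every λ > 1 one has lim_{u→∞} φ*(λu)/φ*(u) = ∞; in particular the conjugate function φ* satisfies the Δ₀-condition. -/
open Filter

/-- The conjugate (Legendre transform over `u ≥ 0`) of an Orlicz function:
`φ*(v) = sup_{u ≥ 0} (u v − φ(u))`. -/
noncomputable def orliczConj (φ : ℝ → ℝ) (v : ℝ) : ℝ :=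
  ⨆ u : Set.Ici (0 : ℝ), ((u : ℝ) * v - φ u)

/-- Gradient inequality for a convex function on `[0, ∞)`. -/
lemma orlicz_grad_ineq (φ φ' : ℝ → ℝ)
    (hconv : ConvexOn ℝ (Set.Ici 0) φ)
    (hderiv : ∀ u : ℝ, 0 < u → HasDerivAt φ (φ' u) u)
    {w t : ℝ} (hw : 0 < w) (ht : 0 ≤ t) :
    φ w + φ' w * (t - w) ≤ φ t := by
  rcases lt_trichotomy t w with hlt | rfl | hlt
  · have h := hconv.slope_le_of_hasDerivAt (Set.mem_Ici.2 ht) (Set.mem_Ici.2 hw.le) hlt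
      (hderiv w hw)
    rw [slope_def_field, div_le_iff₀ (by linarith : (0:ℝ) < w - t)] at h
    linarith
  · simp
  · have h := hconv.le_slope_of_hasDerivAt (Set.mem_Ici.2 hw.le) (Set.mem_Ici.2 ht) hlt
      (hderiv w hw)
    rw [slope_def_field, le_div_iff₀ (by linarith : (0:ℝ) < t - w)] at h
    linarith

/-- If `φ` is a coercive Orlicz function, differentiable on `(0,∞)` with
`lim_{u→∞} u φ'(u)/φ(u) = 1`, then `lim_{u→∞} φ*(λu)/φ*(u) = ∞` for every `λ > 1`;
in particular `φ* ∈ Δ₀`. -/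
theorem stmt0 (φ φ' : ℝ → ℝ)
    (hcont : ContinuousOn φ (Set.Ici 0))
    (hmono : StrictMonoOn φ (Set.Ici 0))
    (hconv : ConvexOn ℝ (Set.Ici 0) φ)
    (h0 : φ 0 = 0)
    (hcoercive : Tendsto (fun u => φ u / u) atTop atTop)
    (hderiv : ∀ u : ℝ, 0 < u → HasDerivAt φ (φ' u) u)
    (hlim : Tendsto (fun u => u * φ' u / φ u) atTop (nhds 1)) :
    (∀ l : ℝ, 1 < l →
      Tendsto (fun u => orliczConj φ (l * u) / orliczConj φ u) atTop atTop) ∧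
    (∃ l : ℝ, 1 < l ∧
      Tendsto (fun u => orliczConj φ (l * u) / orliczConj φ u) atTop atTop) := by
  haveI : Nonempty (Set.Ici (0:ℝ)) := ⟨⟨0, Set.self_mem_Ici⟩⟩
  -- gradient inequality
  have grad : ∀ w t : ℝ, 0 < w → 0 ≤ t → φ w + φ' w * (t - w) ≤ φ t :=
    fun w t hw ht => orlicz_grad_ineq φ φ' hconv hderiv hw ht
  -- φ u ≤ u * φ' u for u > 0
  have hphile : ∀ u : ℝ, 0 < u → φ u ≤ u * φ' u := by
    intro u hu
    have := grad u 0 hu le_rfl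
    rw [h0] at this; nlinarith
  -- φ' tends to ∞
  have hphi'top : Tendsto φ' atTop atTop := by
    refine tendsto_atTop_mono' atTop ?_ hcoercive
    filter_upwards [eventually_gt_atTop (0:ℝ)] with u hu
    exact (div_le_iff₀ hu).2 (by linarith [hphile u hu])
  -- bound lemma: if 0 < w and v ≤ φ' w, then ∀ t ≥ 0, t*v - φ t ≤ w * φ' w - φ w
  have bound : ∀ v w : ℝ, 0 < w → v ≤ φ' w → ∀ t : ℝ, 0 ≤ t →
      t * v - φ t ≤ w * φ' w - φ w := by
    intro v w hw hvw t htnn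
    have := grad w t hw htnn
    nlinarith [mul_nonneg htnn (sub_nonneg.2 hvw)]
  -- boundedness of the defining family
  have bdd : ∀ v w : ℝ, 0 < w → v ≤ φ' w →
      BddAbove (Set.range fun u : Set.Ici (0:ℝ) => (u : ℝ) * v - φ u) := by
    intro v w hw hvw
    refine ⟨w * φ' w - φ w, ?_⟩
    rintro x ⟨⟨t, htnn⟩, rfl⟩
    exact bound v w hw hvw t htnn
  -- lower bound on orliczConj
  have le_conj : ∀ v w t : ℝ, 0 < w → v ≤ φ' w → 0 ≤ t →
      t * v - φ t ≤ orliczConj φ v := by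
    intro v w t hw hvw htnn
    exact le_ciSup (bdd v w hw hvw) (⟨t, htnn⟩ : Set.Ici (0:ℝ))
  -- upper bound on orliczConj
  have conj_le : ∀ v w : ℝ, 0 < w → v ≤ φ' w →
      orliczConj φ v ≤ w * φ' w - φ w := by
    intro v w hw hvw
    exact ciSup_le fun ⟨t, htnn⟩ => bound v w hw hvw t htnn
  -- the ratio φu/(uφ'u) tends to 1
  have hratio : Tendsto (fun u => φ u / (u * φ' u)) atTop (nhds 1) := by
    have := hlim.inv₀ one_ne_zero
    simpa [inv_div] using this
  have main : ∀ l : ℝ, 1 < l →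
      Tendsto (fun u => orliczConj φ (l * u) / orliczConj φ u) atTop atTop := by
    intro l hl
    rw [tendsto_atTop]
    intro C
    set C' : ℝ := max C 1 with hC'
    have hC'pos : 0 < C' := lt_of_lt_of_le one_pos (le_max_right _ _)
    set δ : ℝ := (l - 1) / C' with hδdef
    have hδpos : 0 < δ := div_pos (by linarith) hC'pos
    -- eventually φ u / (u φ' u) > 1 - δ
    have hev : ∀ᶠ u in atTop, 1 - δ < φ u / (u * φ' u) :=
      hratio.eventually (eventually_gt_nhds (by linarith))
    obtain ⟨M₀, hM₀⟩ := eventually_atTop.1 hev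
    set M : ℝ := max M₀ 1 with hM
    have hMpos : (0:ℝ) < M := lt_of_lt_of_le one_pos (le_max_right _ _)
    filter_upwards [eventually_ge_atTop (φ' M), eventually_ge_atTop (φ 1 + 1),
      eventually_gt_atTop (0:ℝ)] with v hvM hv1 hvpos
    -- find b with φ' b ≥ l * v and b ≥ M
    obtain ⟨b, hbM, hbl⟩ := ((eventually_ge_atTop M).and
      (hphi'top.eventually_ge_atTop (l * v))).exists
    -- Darboux: find u ∈ [M, b] with φ' u = v
    have hvb : v ≤ φ' b := le_trans (by nlinarith) hbl
    obtain ⟨u, huIcc, huv⟩ := exists_hasDerivWithinAt_eq_of_ge_of_le hbM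
      (fun x hx => (hderiv x (lt_of_lt_of_le hMpos hx.1)).hasDerivWithinAt) hvM hvb
    have huM : M ≤ u := huIcc.1
    have hupos : 0 < u := lt_of_lt_of_le hMpos huM
    -- estimate from hlim
    have hu1 : 1 - δ < φ u / (u * v) := by
      have := hM₀ u (le_trans (le_max_left _ _) huM)
      rwa [huv] at this
    have hφupos : 0 < φ u := by
      have := hmono (Set.mem_Ici.2 le_rfl) (Set.mem_Ici.2 hupos.le) hupos
      rwa [h0] at this
    have huvpos : 0 < u * v := mul_pos hupos hvpos
    have hφuuv : φ u ≤ u * v := by have := hphile u hupos; rwa [huv] at this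
    have hφuge : (1 - δ) * (u * v) ≤ φ u := by
      have := hu1.le
      calc (1 - δ) * (u * v) ≤ (φ u / (u * v)) * (u * v) := by
            apply mul_le_mul_of_nonneg_right this huvpos.le
        _ = φ u := by field_simp
    -- key quantities
    have hψv_le : orliczConj φ v ≤ u * v - φ u := by
      have := conj_le v u hupos (le_of_eq huv.symm)
      rwa [huv] at this
    have hψv_pos : 0 < orliczConj φ v := by
      have h1 : (1:ℝ) * v - φ 1 ≤ orliczConj φ v :=
        le_conj v u 1 hupos (le_of_eq huv.symm) zero_le_one
      nlinarith
    have hψlv_ge : u * (l * v) - φ u ≤ orliczConj φ (l * v) :=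
      le_conj (l * v) b u (lt_of_lt_of_le hMpos hbM) hbl hupos.le
    -- D := u*v - φ u
    have hDpos : 0 < u * v - φ u := lt_of_lt_of_le hψv_pos hψv_le
    have hDle : u * v - φ u ≤ δ * (u * v) := by nlinarith
    have hnum_ge : C' * (u * v - φ u) ≤ u * (l * v) - φ u := by
      have h1 : C' * (u * v - φ u) ≤ C' * (δ * (u * v)) :=
        mul_le_mul_of_nonneg_left hDle hC'pos.le
      have h2 : C' * (δ * (u * v)) = (l - 1) * (u * v) := by
        rw [hδdef]; field_simp
      nlinarith
    have hψlv_pos : 0 ≤ orliczConj φ (l * v) := by nlinarith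
    have hfrac : (u * (l * v) - φ u) / (u * v - φ u) ≤
        orliczConj φ (l * v) / orliczConj φ v :=
      div_le_div₀ hψlv_pos hψlv_ge hψv_pos hψv_le
    have : C' ≤ (u * (l * v) - φ u) / (u * v - φ u) :=
      (le_div_iff₀ hDpos).2 hnum_ge
    exact le_trans (le_max_left _ _) (le_trans this hfrac)
  exact ⟨main, ⟨2, one_lt_two, main 2 one_lt_two⟩⟩
end

section
/- Let φ be a coercive Orlicz function satisfying the Δ₀-condition. Then the conjugate function φ* satisfies the Δ₂-condition at infinity: there exist C > 1 and u₀ ≥ 0 such that φ*(2u) ≤ C·φ*(u) for all u ≥ u₀. -/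
open Filter

/-- If `φ` is a coercive Orlicz function satisfying the `Δ₀`-condition, then the conjugate
function `φ*` satisfies the `Δ₂`-condition at infinity: there exist `C > 1` and `u₀ ≥ 0`
such that `φ*(2u) ≤ C φ*(u)` for all `u ≥ u₀`. -/
theorem stmt6 (φ : ℝ → ℝ)
    (hcont : ContinuousOn φ (Set.Ici 0))
    (hmono : StrictMonoOn φ (Set.Ici 0))
    (hconv : ConvexOn ℝ (Set.Ici 0) φ)
    (h0 : φ 0 = 0)
    (hcoercive : Tendsto (fun u => φ u / u) atTop atTop)
    (hΔ₀ : ∃ l : ℝ, 1 < l ∧ Tendsto (fun u => φ (l * u) / φ u) atTop atTop) :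
    ∃ C : ℝ, 1 < C ∧ ∃ u₀ : ℝ, 0 ≤ u₀ ∧
      ∀ u : ℝ, u₀ ≤ u → orliczConj φ (2 * u) ≤ C * orliczConj φ u := by
  obtain ⟨l, hl, htend⟩ := hΔ₀
  haveI : Nonempty (Set.Ici (0:ℝ)) := ⟨⟨0, Set.self_mem_Ici⟩⟩
  -- φ is nonnegative on [0, ∞)
  have hφnn : ∀ u, 0 ≤ u → 0 ≤ φ u := by
    intro u hu
    have := hmono.monotoneOn Set.self_mem_Ici hu hu
    linarith
  -- the family defining the conjugate is bounded above
  have hbdd : ∀ v : ℝ, BddAbove (Set.range fun u : Set.Ici (0:ℝ) => (u:ℝ) * v - φ u) := by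
    intro v
    obtain ⟨M, hM⟩ := eventually_atTop.mp (hcoercive.eventually_ge_atTop (v + 1))
    set M' := max M 1 with hM'def
    have hM'1 : (1:ℝ) ≤ M' := le_max_right _ _
    have hbb : BddBelow (φ '' Set.Icc 0 M') :=
      (isCompact_Icc.image_of_continuousOn (hcont.mono Set.Icc_subset_Ici_self)).bddBelow
    obtain ⟨m, hm⟩ := hbb
    refine ⟨max (M' * |v| - m) 0, ?_⟩
    rintro x ⟨⟨u, hu⟩, rfl⟩
    simp only [Set.mem_Ici] at hu
    by_cases hcase : u ≤ M'
    · have h1 : u * v ≤ M' * |v| := by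
        calc u * v ≤ |u * v| := le_abs_self _
          _ = u * |v| := by rw [abs_mul, abs_of_nonneg hu]
          _ ≤ M' * |v| := mul_le_mul_of_nonneg_right hcase (abs_nonneg v)
      have h2 : m ≤ φ u := hm (Set.mem_image_of_mem φ ⟨hu, hcase⟩)
      have : u * v - φ u ≤ M' * |v| - m := by linarith
      exact le_trans this (le_max_left _ _)
    · push_neg at hcase
      have hu1 : (1:ℝ) ≤ u := le_trans hM'1 hcase.le
      have hM0 : M ≤ u := le_trans (le_max_left _ _) hcase.le
      have h1 := hM u hM0
      rw [le_div_iff₀ (by linarith : (0:ℝ) < u)] at h1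
      have : u * v - φ u ≤ 0 := by nlinarith
      exact le_trans this (le_max_right _ _)
  have hconj_ge : ∀ v u, 0 ≤ u → u * v - φ u ≤ orliczConj φ v := by
    intro v u hu
    exact le_ciSup (hbdd v) (⟨u, hu⟩ : Set.Ici (0:ℝ))
  have hconj_nn : ∀ v, 0 ≤ orliczConj φ v := by
    intro v
    have := hconj_ge v 0 le_rfl
    simpa [h0] using this
  -- Δ₀ : get u₁ ≥ 1 with φ(l u) ≥ 4 l φ(u) for u ≥ u₁
  obtain ⟨u₁', hu₁'⟩ := eventually_atTop.mp (htend.eventually_ge_atTop (4 * l))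
  set u₁ := max u₁' 1 with hu₁def
  have hu₁1 : (1:ℝ) ≤ u₁ := le_max_right _ _
  have hkey : ∀ u, u₁ ≤ u → 4 * l * φ u ≤ φ (l * u) := by
    intro u hu
    have h1 : (1:ℝ) ≤ u := le_trans hu₁1 hu
    have hφpos : 0 < φ u := by
      have := hmono (Set.self_mem_Ici (a := (0:ℝ))) (show u ∈ Set.Ici (0:ℝ) by simp; linarith) (by linarith)
      linarith
    have h2 := hu₁' u (le_trans (le_max_left _ _) hu)
    rw [le_div_iff₀ hφpos] at h2
    linarith
  set A := 2 * l * u₁ with hAdef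
  have hlu₁ : (0:ℝ) < l * u₁ := by nlinarith
  refine ⟨2 * l, by linarith, max 0 (φ A / (l * u₁)), le_max_left _ _, ?_⟩
  intro v hv
  have hv0 : 0 ≤ v := le_trans (le_max_left _ _) hv
  have hvA : φ A ≤ l * u₁ * v := by
    have h1 : φ A / (l * u₁) ≤ v := le_trans (le_max_right _ _) hv
    rw [div_le_iff₀ hlu₁] at h1
    nlinarith
  apply ciSup_le
  rintro ⟨u, hu⟩
  simp only [Set.mem_Ici] at hu
  show u * (2 * v) - φ u ≤ 2 * l * orliczConj φ v
  by_cases hcase : u ≤ l * u₁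
  · have hA0 : (0:ℝ) ≤ A := by nlinarith
    have h1 : l * u₁ * v ≤ orliczConj φ v := by
      have h2 := hconj_ge v A hA0
      have : A * v - φ A ≥ l * u₁ * v := by
        have : A * v = 2 * (l * u₁ * v) := by rw [hAdef]; ring
        nlinarith
      linarith
    have hφu := hφnn u hu
    have hcnn := hconj_nn v
    nlinarith [mul_nonneg (sub_nonneg.mpr hcase) hv0,
      mul_nonneg (mul_nonneg (by linarith : (0:ℝ) ≤ l - 1) hlu₁.le) hv0,
      mul_nonneg (by linarith : (0:ℝ) ≤ 2 * l) (sub_nonneg.mpr h1)]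
  · push_neg at hcase
    set w := u / l with hwdef
    have hl0 : (0:ℝ) < l := by linarith
    have hlw : l * w = u := by rw [hwdef, mul_div_assoc', mul_comm, mul_div_assoc, div_self hl0.ne', mul_one]
    have hw1 : u₁ ≤ w := by
      rw [hwdef, le_div_iff₀ hl0]
      nlinarith
    have hw0 : (0:ℝ) ≤ w := by linarith
    have hk := hkey w hw1
    rw [hlw] at hk
    have h2 := hconj_ge v w hw0
    have hφw : 0 ≤ φ w := hφnn w hw0
    have hu2v : u * (2 * v) = 2 * l * (w * v) := by rw [← hlw]; ring
    nlinarith [mul_nonneg (by linarith : (0:ℝ) ≤ 2 * l) (sub_nonneg.mpr h2),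
      mul_nonneg (by linarith : (0:ℝ) ≤ 2 * l) hφw]
end

section
/- (Rosenthal-type lemma) Let X be a Banach space, let (x_n) ⊂ X be a sequence converging to 0 in the weak topology of X, and let (x*_n) ⊂ X* be a sequence converging to 0 in the weak* topology of X*. Then for every ε > 0 there exists a strictly increasing sequence (k_i) ⊂ ℕ such that for each i ∈ ℕ one has ∑_{j ≠ i} |x*_{k_j}(x_{k_i})| < ε. -/
open Filter

/-- (Rosenthal-type lemma) Let `X` be a Banach space, `(xₙ) ⊂ X` weakly null and
`(x*ₙ) ⊂ X*` weak*-null. Then for every `ε > 0` there is a strictly increasing sequence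
`(kᵢ) ⊂ ℕ` such that `∑_{j ≠ i} |x*_{k_j}(x_{k_i})| < ε` for each `i`. -/
theorem stmt10 (X : Type*) [NormedAddCommGroup X] [NormedSpace ℝ X] [CompleteSpace X]
    (x : ℕ → X) (xs : ℕ → X →L[ℝ] ℝ)
    (hx : ∀ f : X →L[ℝ] ℝ, Tendsto (fun n => f (x n)) atTop (nhds 0))
    (hxs : ∀ v : X, Tendsto (fun n => xs n v) atTop (nhds 0)) :
    ∀ ε : ℝ, 0 < ε → ∃ k : ℕ → ℕ, StrictMono k ∧
      ∀ i : ℕ, Summable (fun j : {j : ℕ // j ≠ i} => |xs (k (j : ℕ)) (x (k i))|) ∧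
        (∑' j : {j : ℕ // j ≠ i}, |xs (k (j : ℕ)) (x (k i))|) < ε := by
  intro ε hε
  -- key selection lemma
  have hδ : ∀ m : ℕ, (0:ℝ) < ε / 2 ^ (m + 2) := fun m =>
    div_pos hε (by positivity)
  have key : ∀ (s : Finset ℕ) (N m : ℕ), ∃ n, N < n ∧
      ∀ p ∈ s, |xs p (x n)| < ε / 2 ^ (m + 2) ∧ |xs n (x p)| < ε / 2 ^ (m + 2) := by
    intro s N m
    have h1 : ∀ᶠ n in atTop, ∀ p ∈ s, |xs p (x n)| < ε / 2 ^ (m + 2) ∧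
        |xs n (x p)| < ε / 2 ^ (m + 2) := by
      rw [eventually_all_finset]
      intro p _
      have hA : ∀ᶠ n in atTop, |xs p (x n)| < ε / 2 ^ (m + 2) := by
        have := (hx (xs p)).eventually (eventually_abs_sub_lt 0 (hδ m))
        simpa using this
      have hB : ∀ᶠ n in atTop, |xs n (x p)| < ε / 2 ^ (m + 2) := by
        have := (hxs (x p)).eventually (eventually_abs_sub_lt 0 (hδ m))
        simpa using this
      exact hA.and hB
    have h2 : ∀ᶠ n in atTop, N < n := eventually_gt_atTop N
    obtain ⟨n, hn1, hn2⟩ := (h2.and h1).exists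
    exact ⟨n, hn1, hn2⟩
  choose f hf1 hf2 using key
  -- recursive construction carrying the set of chosen indices
  let F : ℕ → ℕ × Finset ℕ := fun m =>
    Nat.rec ((0 : ℕ), ({0} : Finset ℕ))
      (fun m p => (f p.2 p.1 (m + 1), insert (f p.2 p.1 (m + 1)) p.2)) m
  set k : ℕ → ℕ := fun m => (F m).1 with hk
  have hFsucc : ∀ m, F (m + 1) = (f (F m).2 (F m).1 (m + 1),
      insert (f (F m).2 (F m).1 (m + 1)) (F m).2) := fun m => rfl
  have hmono : StrictMono k := by
    apply strictMono_nat_of_lt_succ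
    intro m
    have := hf1 (F m).2 (F m).1 (m + 1)
    simpa [hk, hFsucc m] using this
  have hmem : ∀ j m, j ≤ m → k j ∈ (F m).2 := by
    intro j m
    induction m with
    | zero => intro h; interval_cases j; simp [hk, F]
    | succ m ih =>
      intro h
      rcases Nat.lt_or_ge j (m + 1) with h' | h'
      · have := ih (Nat.lt_succ_iff.mp h')
        rw [hFsucc m]
        exact Finset.mem_insert_of_mem this
      · have : j = m + 1 := le_antisymm h h'
        subst this
        rw [hFsucc m]
        simp [hk, hFsucc m]
  have hcond : ∀ i j : ℕ, j < i →
      |xs (k j) (x (k i))| < ε / 2 ^ (i + 2) ∧ |xs (k i) (x (k j))| < ε / 2 ^ (i + 2) := by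
    intro i j hji
    cases i with
    | zero => omega
    | succ m =>
      have hmemj : k j ∈ (F m).2 := hmem j m (Nat.lt_succ_iff.mp hji)
      have hkm : k (m + 1) = f (F m).2 (F m).1 (m + 1) := by
        simp [hk, hFsucc m]
      rw [hkm]
      exact hf2 (F m).2 (F m).1 (m + 1) (k j) hmemj
  -- the dominating sequence
  set g : ℕ → ℝ := fun j => ε / 2 ^ (j + 2) with hg
  have hge : g = fun j => (ε / 4) * (1 / 2 : ℝ) ^ j := by
    funext j
    simp only [hg]
    rw [pow_add, div_pow, one_pow, div_mul_div_comm, mul_one, mul_comm]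
    norm_num
  have hgsum : Summable g := by
    rw [hge]; exact summable_geometric_two.mul_left _
  have hgtsum : ∑' j, g j = ε / 2 := by
    rw [hge, tsum_mul_left, tsum_geometric_two]; ring
  refine ⟨k, hmono, fun i => ?_⟩
  have hterm : ∀ j : ℕ, j ≠ i → |xs (k j) (x (k i))| ≤ g j := by
    intro j hji
    rcases lt_or_gt_of_ne hji with h | h
    · -- j < i : bound ε/2^(i+2) ≤ ε/2^(j+2)
      have h1 := (hcond i j h).1
      have h2 : ε / 2 ^ (i + 2) ≤ ε / 2 ^ (j + 2) := by
        apply div_le_div_of_nonneg_left hε.le (by positivity)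
        exact pow_le_pow_right₀ one_le_two (by omega)
      exact le_trans h1.le h2
    · -- i < j
      exact ((hcond j i h).2).le
  have hsum : Summable (fun j : {j : ℕ // j ≠ i} => |xs (k (j : ℕ)) (x (k i))|) := by
    exact Summable.of_nonneg_of_le (fun j => abs_nonneg _)
      (fun j : {j : ℕ // j ≠ i} => hterm (j : ℕ) j.2)
      (hgsum.comp_injective Subtype.val_injective)
  refine ⟨hsum, ?_⟩
  have hle : (∑' j : {j : ℕ // j ≠ i}, |xs (k (j : ℕ)) (x (k i))|) ≤ ∑' j, g j := by
    exact Summable.tsum_le_tsum_of_inj (fun j : {j : ℕ // j ≠ i} => (j : ℕ)) Subtype.val_injective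
      (fun c _ => by positivity) (fun j : {j : ℕ // j ≠ i} => hterm (j : ℕ) j.2) hsum hgsum
  calc (∑' j : {j : ℕ // j ≠ i}, |xs (k (j : ℕ)) (x (k i))|) ≤ ∑' j, g j := hle
    _ = ε / 2 := hgtsum
    _ < ε := by linarith
end

section
/- Let (Ω, Σ, μ) be a measure space, let 1 ≤ p < ∞, let ε > 0, let (f_n) be a sequence in L^p(μ), and let (B_n) be a decreasing sequence of measurable sets (B_{n+1} ⊂ B_n) with μ(⋂_n B_n) = 0 such that ‖f_n·χ_{B_n}‖_{L^p} ≥ ε for every n. Then there exist a subsequence (f_{n_k}) and a sequence (A_k) of pairwise disjoint measurable sets such that ‖f_{n_k}·χ_{A_k}‖_{L^p} ≥ ε/2 for every k. -/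
open Filter MeasureTheory ENNReal Topology

/-- If `(f_n) ⊂ L^p(μ)` (`1 ≤ p < ∞`) and `(B_n)` is a decreasing sequence of measurable
sets with `μ(⋂ B_n) = 0` such that `‖f_n χ_{B_n}‖_p ≥ ε` for all `n`, then there exist a
subsequence `(f_{n_k})` and pairwise disjoint measurable sets `(A_k)` with
`‖f_{n_k} χ_{A_k}‖_p ≥ ε/2` for all `k`. -/
theorem stmt14 {Ω : Type*} [MeasurableSpace Ω] (μ : Measure Ω)
    (p : ℝ≥0∞) (hp1 : 1 ≤ p) (hp : p ≠ ∞)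
    (ε : ℝ) (hε : 0 < ε)
    (f : ℕ → Ω → ℝ) (hf : ∀ n, MemLp (f n) p μ)
    (B : ℕ → Set Ω) (hBmeas : ∀ n, MeasurableSet (B n)) (hBanti : Antitone B)
    (hBnull : μ (⋂ n, B n) = 0)
    (hnorm : ∀ n, ENNReal.ofReal ε ≤ eLpNorm ((B n).indicator (f n)) p μ) :
    ∃ k : ℕ → ℕ, StrictMono k ∧ ∃ A : ℕ → Set Ω,
      (∀ i, MeasurableSet (A i)) ∧ Pairwise (Function.onFun Disjoint A) ∧
      ∀ i, ENNReal.ofReal (ε / 2) ≤ eLpNorm ((A i).indicator (f (k i))) p μ := by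
  have hp0 : p ≠ 0 := fun h => by simp [h] at hp1
  have hq : 0 < p.toReal := ENNReal.toReal_pos hp0 hp
  set q := p.toReal
  -- key: for each n, there is m > n with small norm on B m
  have key : ∀ n : ℕ, ∃ m, n < m ∧
      eLpNorm ((B m).indicator (f n)) p μ ≤ ENNReal.ofReal (ε / 2) := by
    intro n
    set ν : Measure Ω := μ.withDensity (fun x => (‖f n x‖₊ : ℝ≥0∞) ^ q) with hν
    have hνB : ∀ m, ν (B m) = ∫⁻ x in B m, (‖f n x‖₊ : ℝ≥0∞) ^ q ∂μ := fun m =>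
      withDensity_apply _ (hBmeas m)
    have hνfin : ν (B 0) ≠ ∞ := by
      rw [hνB]
      refine ne_of_lt (lt_of_le_of_lt (setLIntegral_le_lintegral _ _) ?_)
      exact lintegral_rpow_enorm_lt_top_of_eLpNorm_lt_top hp0 hp (hf n).eLpNorm_lt_top
    have hν0 : ν (⋂ m, B m) = 0 := by
      rw [withDensity_apply _ (MeasurableSet.iInter fun m => hBmeas m),
        setLIntegral_measure_zero _ _ hBnull]
    have htend : Tendsto (ν ∘ B) atTop (𝓝 0) := by
      rw [← hν0]
      exact tendsto_measure_iInter_atTop (fun m => (hBmeas m).nullMeasurableSet)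
        hBanti ⟨0, hνfin⟩
    have hδ : (0 : ℝ≥0∞) < (ENNReal.ofReal (ε / 2)) ^ q :=
      ENNReal.rpow_pos (by simp [ENNReal.ofReal_pos]; linarith) (by simp)
    have := (htend.eventually_lt_const hδ).and (eventually_gt_atTop n)
    obtain ⟨m, hm1, hm2⟩ := this.exists
    refine ⟨m, hm2, ?_⟩
    rw [eLpNorm_indicator_eq_eLpNorm_restrict (hBmeas m),
      eLpNorm_eq_lintegral_rpow_enorm_toReal hp0 hp]
    calc (∫⁻ x in B m, (‖f n x‖₊ : ℝ≥0∞) ^ q ∂μ) ^ (1 / q)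
        ≤ ((ENNReal.ofReal (ε / 2)) ^ q) ^ (1 / q) := by
          refine ENNReal.rpow_le_rpow ?_ (by positivity)
          rw [← hνB]; exact hm1.le
      _ = ENNReal.ofReal (ε / 2) := by
          rw [← ENNReal.rpow_mul, mul_one_div, div_self hq.ne', ENNReal.rpow_one]
  -- construct the subsequence
  choose m hm1 hm2 using key
  let k : ℕ → ℕ := fun i => Nat.rec 0 (fun j kj => m kj) i
  have hks : ∀ i, k (i + 1) = m (k i) := fun i => rfl
  have hkmono : StrictMono k := strictMono_nat_of_lt_succ fun i => by
    rw [hks]; exact hm1 (k i)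
  refine ⟨k, hkmono, fun i => B (k i) \ B (k (i + 1)),
    fun i => (hBmeas _).diff (hBmeas _), ?_, ?_⟩
  · have hd : ∀ i j, i < j → Disjoint (B (k i) \ B (k (i + 1))) (B (k j) \ B (k (j + 1))) := by
      intro i j h
      rw [Set.disjoint_left]
      rintro x ⟨_, hx2⟩ ⟨hx3, _⟩
      exact hx2 (hBanti (hkmono.monotone (show i + 1 ≤ j by omega)) hx3)
    exact fun i j hij => hij.lt_or_gt.elim (fun h => hd _ _ h) fun h => (hd _ _ h).symm
  · intro i
    have hsub : B (k (i + 1)) ⊆ B (k i) := hBanti (hkmono (Nat.lt_succ_self i)).le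
    have hsplit : (B (k i)).indicator (f (k i)) =
        (B (k i) \ B (k (i + 1))).indicator (f (k i)) +
          (B (k (i + 1))).indicator (f (k i)) := by
      funext x
      by_cases h1 : x ∈ B (k (i + 1))
      · simp [Set.indicator, Set.mem_diff, h1, hsub h1]
      · by_cases h2 : x ∈ B (k i) <;>
          simp [Set.indicator, h1, h2]
    have h1 : ENNReal.ofReal ε ≤ eLpNorm ((B (k i)).indicator (f (k i))) p μ :=
      hnorm (k i)
    have h2 : eLpNorm ((B (k i)).indicator (f (k i))) p μ ≤
        eLpNorm ((B (k i) \ B (k (i + 1))).indicator (f (k i))) p μ +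
          eLpNorm ((B (k (i + 1))).indicator (f (k i))) p μ := by
      rw [hsplit]
      exact eLpNorm_add_le
        ((hf _).aestronglyMeasurable.indicator ((hBmeas _).diff (hBmeas _)))
        ((hf _).aestronglyMeasurable.indicator (hBmeas _)) hp1
    have h3 := hm2 (k i)
    rw [← hks] at h3
    have h4 : ENNReal.ofReal (ε / 2) + ENNReal.ofReal (ε / 2) ≤
        eLpNorm ((B (k i) \ B (k (i + 1))).indicator (f (k i))) p μ +
          ENNReal.ofReal (ε / 2) := by
      calc ENNReal.ofReal (ε / 2) + ENNReal.ofReal (ε / 2)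
          = ENNReal.ofReal ε := by
            rw [← ENNReal.ofReal_add (by linarith) (by linarith)]; ring_nf
        _ ≤ _ := h1.trans (h2.trans (add_le_add_right h3 _))
    exact (ENNReal.add_le_add_iff_right ENNReal.ofReal_ne_top).1 h4
end
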